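/- Let ℓ ≥ 4 be an even integer and S a (2^ℓ − 1)-periodic binary sequence whose linear complexity is at most 5ℓ/2 (as is the case for sequences from the large Kasami family). Then there exists an integer k with 1 < k ≤ 9 such that S has a full peak in the periodic correlation measure of order k, i.e. θ_k(S) = 2^ℓ − 1. -/

import Mathlib

open Finset

/-- The first `N` terms of the binary sequence `s` satisfy a linear recurrence of order `L`
over `F₂`: `s (i+L) = c_{L-1} s (i+L-1) + … + c_0 s i` for `0 ≤ i < N - L`. -/
def IsLinRecOn (s : ℕ → ZMod 2) (N L : ℕ) : Prop :=
  ∃ c : Fin L → ZMod 2, ∀ i, i + L < N → s (i + L) = ∑ j : Fin L, c j * s (i + j)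

/-- The `N`th linear complexity of a binary sequence `s`: the smallest positive `L` such that
the first `N` terms satisfy a linear recurrence of order `L`, with the convention that it is `0`
when the first `N` terms all vanish. -/
noncomputable def linComplexity (s : ℕ → ZMod 2) (N : ℕ) : ℕ :=
  if ∀ i < N, s i = 0 then 0 else sInf {L | 0 < L ∧ IsLinRecOn s N L}

/-- The `N`th (aperiodic) correlation measure of order `k` of a binary sequence `s`:
`max_{U,D} |∑_{n=0}^{U-1} (-1)^{s_{n+d₁}+…+s_{n+d_k}}|` over `U ≤ N - k + 1` and
`0 ≤ d₁ < … < d_k ≤ N - U`. -/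
noncomputable def corr (s : ℕ → ZMod 2) (N k : ℕ) : ℕ :=
  sSup {m : ℕ | ∃ (U : ℕ) (d : Fin k → ℕ), U + k ≤ N + 1 ∧ StrictMono d ∧
    (∀ j, d j + U ≤ N) ∧
    m = (∑ n ∈ range U, (-1 : ℤ) ^ (∑ j : Fin k, (s (n + d j)).val)).natAbs}

/-- The periodic correlation measure of order `k` of a `T`-periodic binary sequence `s`:
`max_D |∑_{n=0}^{T-1} (-1)^{s_{n+d₁}+…+s_{n+d_k}}|` over `0 ≤ d₁ < … < d_k < T`. -/
noncomputable def pcorr (s : ℕ → ZMod 2) (T k : ℕ) : ℕ :=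
  sSup {m : ℕ | ∃ d : Fin k → ℕ, StrictMono d ∧ (∀ j, d j < T) ∧
    m = (∑ n ∈ range T, (-1 : ℤ) ^ (∑ j : Fin k, (s (n + d j)).val)).natAbs}

/-- The first `N` terms of `s` are generated by a (not necessarily linear) recurrence of
order `M`. -/
def IsMaxRecOn (s : ℕ → ZMod 2) (N M : ℕ) : Prop :=
  ∃ f : (Fin M → ZMod 2) → ZMod 2, ∀ i, i + M < N → s (i + M) = f (fun j => s (i + j))

/-- The `N`th maximum-order complexity of a binary sequence `s`. -/
noncomputable def maxOrderComplexity (s : ℕ → ZMod 2) (N : ℕ) : ℕ :=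
  sInf {M | 0 < M ∧ IsMaxRecOn s N M}

/-!
Over `F₂` the linear complexity bound gives a recurrence of order `L ≤ 5ℓ/2` holding on two
periods of `s`, hence everywhere by periodicity. For every finite set `A` of shifts, the window
sum `n ↦ ∑_{e ∈ A} s (n + e)` solves the same recurrence, so it is determined by its first `L`
terms. As `binom(2^ℓ - 1, 4) > 2^L`, two distinct `4`-sets `A ≠ B ⊆ [0, 2^ℓ - 1)` give the same
window sum; in characteristic `2` the window over `A ∆ B` then vanishes identically, and its
`2 ≤ |A ∆ B| ≤ 8` shifts produce a full peak.
-/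

open scoped symmDiff

theorem Finset.sum_symmDiff_eq_zero {ι R : Type*} [DecidableEq ι] [Semiring R] [CharP R 2]
    {A B : Finset ι} {f : ι → R} (h : ∑ i ∈ A, f i = ∑ i ∈ B, f i) :
    ∑ i ∈ A ∆ B, f i = 0 :=
  calc ∑ i ∈ A ∆ B, f i = ∑ i ∈ A \ B, f i + ∑ i ∈ B \ A, f i := sum_union disjoint_sdiff_sdiff
    _ = (∑ i ∈ A ∩ B, f i + ∑ i ∈ A \ B, f i) + (∑ i ∈ B ∩ A, f i + ∑ i ∈ B \ A, f i) := by
      rw [inter_comm B A, add_add_add_comm, CharTwo.add_self_eq_zero, zero_add]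
    _ = 0 := by rw [sum_inter_add_sum_sdiff, sum_inter_add_sum_sdiff, h, CharTwo.add_self_eq_zero]

theorem Finset.one_lt_card_symmDiff {α : Type*} [DecidableEq α] {A B : Finset α} (hAB : A ≠ B)
    (hcard : A.card = B.card) : 1 < (A ∆ B).card := by
  have hpos : 0 < (A ∆ B).card := card_pos.2 (symmDiff_nonempty.2 hAB)
  rw [Finset.symmDiff_def, card_union_of_disjoint disjoint_sdiff_sdiff] at hpos ⊢
  have := card_sdiff_comm hcard
  omega

namespace LinearRecurrence

variable {R : Type*} [CommSemiring R] (E : LinearRecurrence R) {u : ℕ → R}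

theorem isSolution_of_periodic {T : ℕ} (hT : 0 < T) (hu : Function.Periodic u T)
    (h : ∀ n < T, u (n + E.order) = ∑ i, E.coeffs i * u (n + i)) : E.IsSolution u := by
  have hmod : ∀ n k, u (n + k) = u (n % T + k) := fun n k => by
    have := hu.nat_mul (n / T) (n % T + k)
    rwa [Nat.cast_id, add_right_comm, Nat.mod_add_div'] at this
  intro n
  rw [hmod, h _ (Nat.mod_lt n hT)]
  simp only [← hmod]

variable {E}

theorem IsSolution.shift (hu : E.IsSolution u) (k : ℕ) : E.IsSolution (fun n => u (n + k)) :=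
  fun n => by simpa only [add_right_comm n k] using hu (n + k)

theorem IsSolution.sum_shift (hu : E.IsSolution u) (A : Finset ℕ) :
    E.IsSolution (fun n => ∑ e ∈ A, u (n + e)) := by
  have hmem := E.solSpace.sum_mem (t := A) (f := fun e n => u (n + e)) fun e _ => hu.shift e
  rw [Finset.sum_fn] at hmem
  exact hmem

theorem IsSolution.exists_sum_shift_eq_zero [Fintype R] [CharP R 2] (hu : E.IsSolution u)
    (S : Finset ℕ) {r : ℕ} (hcard : Fintype.card R ^ E.order < S.card.choose r) :
    ∃ D ⊆ S, 1 < D.card ∧ D.card ≤ 2 * r ∧ ∀ n, ∑ e ∈ D, u (n + e) = 0 := by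
  let window (A : Finset ℕ) : E.solSpace := ⟨fun n => ∑ e ∈ A, u (n + e), hu.sum_shift A⟩
  have hlt : (univ : Finset (Fin E.order → R)).card < (S.powersetCard r).card := by
    simpa [card_powersetCard] using hcard
  obtain ⟨A, hA, B, hB, hAB, heq⟩ := exists_ne_map_eq_of_card_lt_of_maps_to hlt
    (f := fun A => E.toInit (window A)) fun _ _ => mem_coe.2 (mem_univ _)
  rw [mem_powersetCard] at hA hB
  have hwindow : ∀ n, ∑ e ∈ A, u (n + e) = ∑ e ∈ B, u (n + e) :=
    congrFun (congrArg Subtype.val (E.toInit.injective heq))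
  refine ⟨A ∆ B, symmDiff_subset_union.trans (union_subset hA.1 hB.1),
    one_lt_card_symmDiff hAB (hA.2.trans hB.2.symm), ?_, fun n => sum_symmDiff_eq_zero (hwindow n)⟩
  calc (A ∆ B).card ≤ (A ∪ B).card := card_le_card symmDiff_subset_union
    _ ≤ A.card + B.card := card_union_le A B
    _ = 2 * r := by omega

end LinearRecurrence

theorem isLinRecOn_linComplexity (s : ℕ → ZMod 2) (N : ℕ) :
    IsLinRecOn s N (linComplexity s N) := by
  unfold linComplexity
  split_ifs with hzero
  -- an order-`0` recurrence says exactly that the first `N` terms vanish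
  · exact ⟨Fin.elim0, fun i hi => by simpa using hzero i (by omega)⟩
  · have hN : 0 < N := by
      by_contra! hN
      exact hzero fun i hi => by omega
    exact (Nat.sInf_mem (⟨N, hN, fun _ => 0, fun i hi => by omega⟩ :
      {L | 0 < L ∧ IsLinRecOn s N L}.Nonempty)).2

theorem natAbs_sum_neg_one_pow_le (T : ℕ) (f : ℕ → ℕ) :
    (∑ n ∈ range T, (-1 : ℤ) ^ f n).natAbs ≤ T :=
  (Int.natAbs_sum_le (range T) fun n => (-1 : ℤ) ^ f n).trans (by simp)

theorem pcorr_eq_of_forall_sum_eq_zero {s : ℕ → ZMod 2} {T : ℕ} {D : Finset ℕ}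
    (hD : ∀ e ∈ D, e < T) (h : ∀ n, ∑ e ∈ D, s (n + e) = 0) : pcorr s T D.card = T := by
  set d := D.orderEmbOfFin rfl
  have hsum : ∀ n, ∑ j, s (n + d j) = ∑ e ∈ D, s (n + e) := fun n => by
    conv_rhs => rw [← D.image_orderEmbOfFin_univ rfl, sum_image fun _ _ _ _ hij => d.injective hij]
  have heven : ∀ n, Even (∑ j, (s (n + d j)).val) := fun n => by
    rw [← ZMod.natCast_eq_zero_iff_even, Nat.cast_sum]
    simp only [ZMod.natCast_val, ZMod.cast_id', id]
    rw [hsum, h]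
  unfold pcorr
  refine le_antisymm (csSup_le' ?bound) (le_csSup ⟨T, ?bound⟩
    ⟨d, d.strictMono, fun j => hD _ (D.orderEmbOfFin_mem rfl j), ?_⟩)
  case bound =>
    rintro _ ⟨d, -, -, rfl⟩
    exact natAbs_sum_neg_one_pow_le T _
  rw [sum_congr rfl fun n _ => (heven n).neg_one_pow]
  simp

theorem pow_five_lt_choose_four {y : ℕ} (hy : 4 ≤ y) : y ^ 5 < (y ^ 2 - 1).choose 4 := by
  obtain ⟨z, hz⟩ : ∃ z, y ^ 2 = z + 4 := Nat.exists_eq_add_of_le' (by nlinarith)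
  have hz12 : 12 ≤ z := by nlinarith
  have hchoose : 24 * (z + 3).choose 4 = (z + 3) * (z + 2) * (z + 1) * z := by
    rw [show 24 = Nat.factorial 4 by rfl, ← Nat.descFactorial_eq_factorial_mul_choose]
    simp only [Nat.descFactorial_succ, add_tsub_cancel_right, Nat.reduceSubDiff,
      Nat.add_one_sub_one, tsub_zero, Nat.descFactorial_zero, mul_one]
    ring
  have hy5 : 24 * y ^ 5 ≤ 6 * (z + 4) ^ 3 :=
    calc 24 * y ^ 5 = 6 * (4 * y) * (y ^ 2) ^ 2 := by ring
      _ ≤ 6 * (y * y) * (y ^ 2) ^ 2 := by gcongr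
      _ = 6 * (z + 4) ^ 3 := by rw [← sq, hz]; ring
  rw [hz, show z + 4 - 1 = z + 3 by omega]
  -- it remains to see `6 (z + 4)³ < z (z + 1) (z + 2) (z + 3)` for `z ≥ 12`
  nlinarith

/-- **Large Kasami family.** For even `ℓ ≥ 4`, a `(2^ℓ - 1)`-periodic binary sequence with
linear complexity at most `5ℓ/2` has a full peak in the periodic correlation measure of some
order `k` with `1 < k ≤ 9`. -/
theorem large_kasami_peak (ℓ : ℕ) (hℓ : 4 ≤ ℓ) (heven : Even ℓ) (s : ℕ → ZMod 2)
    (hper : ∀ i, s (i + (2 ^ ℓ - 1)) = s i)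
    (hL : linComplexity s (2 * (2 ^ ℓ - 1)) ≤ 5 * ℓ / 2) :
    ∃ k, 1 < k ∧ k ≤ 9 ∧ pcorr s (2 ^ ℓ - 1) k = 2 ^ ℓ - 1 := by
  obtain ⟨m, rfl⟩ := heven
  set T := 2 ^ (m + m) - 1
  set L := linComplexity s (2 * T)
  obtain ⟨c, hc⟩ := isLinRecOn_linComplexity s (2 * T)
  have hcount : 2 ^ L < T.choose 4 :=
    calc 2 ^ L ≤ 2 ^ (5 * m) := Nat.pow_le_pow_right two_pos (by omega)
      _ = (2 ^ m) ^ 5 := by rw [← pow_mul, mul_comm]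
      _ < ((2 ^ m) ^ 2 - 1).choose 4 :=
        pow_five_lt_choose_four (Nat.pow_le_pow_right two_pos (by omega : 2 ≤ m))
      _ = T.choose 4 := by rw [← pow_mul, mul_two]
  have hLT : L < T := (Nat.pow_lt_pow_iff_right one_lt_two).1
    (hcount.trans_le (T.choose_le_two_pow 4))
  have hsol : (⟨L, c⟩ : LinearRecurrence (ZMod 2)).IsSolution s :=
    LinearRecurrence.isSolution_of_periodic _ (by omega) hper fun n hn => hc n (by omega)
  obtain ⟨D, hDT, hD_gt, hD_le, hD⟩ :=
    hsol.exists_sum_shift_eq_zero (range T) (by simpa using hcount)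
  exact ⟨D.card, hD_gt, by omega,
    pcorr_eq_of_forall_sum_eq_zero (fun e he => mem_range.1 (hDT he)) hD⟩
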